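/- Let f be a positive function of class C¹ on (0,1] with f(1) = 1, and suppose the function H_f(x) := x·f'(x) is non-increasing on (0,1]. Then f is an r-Weierstrass function on (0,1], i.e. f(x·y) ≤ f(x) + f(y) - 1 for all x, y ∈ (0,1]. -/

import Mathlib

/-! For fixed `y ∈ (0,1]`, the function `φ t = f t - f (t * y)` has derivative
`f' t - y f' (t y) = (H_f t - H_f (t y)) / t ≤ 0`, because `t y ≤ t` and `H_f` is
non-increasing. Hence `φ` is non-increasing on `(0,1]`, and `φ 1 ≤ φ x` is the claim. -/

open Set

lemma mul_mem_Ioc_zero_one {x y : ℝ} (hx : x ∈ Ioc 0 1) (hy : y ∈ Ioc 0 1) :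
    x * y ∈ Ioc 0 1 :=
  ⟨mul_pos hx.1 hy.1, mul_le_one₀ hx.2 hy.1.le hy.2⟩

section

variable {f f' : ℝ → ℝ}

lemma sub_mul_comp_mul_nonpos_of_antitoneOn (hH : AntitoneOn (fun x => x * f' x) (Ioc 0 1))
    {t y : ℝ} (ht : t ∈ Ioc 0 1) (hy : y ∈ Ioc 0 1) : f' t - f' (t * y) * y ≤ 0 := by
  have hle : t * f' t ≤ t * y * f' (t * y) :=
    hH (mul_mem_Ioc_zero_one ht hy) ht (mul_le_of_le_one_right ht.1.le hy.2)
  have hfactor : t * (f' t - f' (t * y) * y) ≤ 0 := by linarith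
  exact nonpos_of_mul_nonpos_right hfactor ht.1

variable (hderiv : ∀ x ∈ Ioc (0:ℝ) 1, HasDerivWithinAt f (f' x) (Ioc 0 1) x)
include hderiv

lemma hasDerivAt_sub_comp_mul {t y : ℝ} (ht : t ∈ Ioo 0 1) (hy : y ∈ Ioc 0 1) :
    HasDerivAt (fun s => f s - f (s * y)) (f' t - f' (t * y) * y) t := by
  have hty : t * y ∈ Ioo 0 1 :=
    ⟨mul_pos ht.1 hy.1, (mul_le_of_le_one_right ht.1.le hy.2).trans_lt ht.2⟩
  have hft : HasDerivAt f (f' t) t :=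
    (hderiv t (Ioo_subset_Ioc_self ht)).hasDerivAt (Ioc_mem_nhds ht.1 ht.2)
  have hfty : HasDerivAt f (f' (t * y)) (t * y) :=
    (hderiv _ (Ioo_subset_Ioc_self hty)).hasDerivAt (Ioc_mem_nhds hty.1 hty.2)
  have hcomp : HasDerivAt (fun s => f (s * y)) (f' (t * y) * y) t := by
    simpa [Function.comp_def] using hfty.comp t ((hasDerivAt_id t).mul_const y)
  exact hft.sub hcomp

lemma antitoneOn_sub_comp_mul (hH : AntitoneOn (fun x => x * f' x) (Ioc 0 1))
    {y : ℝ} (hy : y ∈ Ioc 0 1) : AntitoneOn (fun t => f t - f (t * y)) (Ioc 0 1) := by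
  have hfc : ContinuousOn f (Ioc 0 1) := fun t ht => (hderiv t ht).continuousWithinAt
  have hφc : ContinuousOn (fun t => f t - f (t * y)) (Ioc 0 1) :=
    hfc.sub (hfc.comp (continuousOn_id.mul continuousOn_const)
      fun t ht => mul_mem_Ioc_zero_one ht hy)
  apply antitoneOn_of_deriv_nonpos (convex_Ioc 0 1) hφc
  · rw [interior_Ioc]
    exact fun t ht => (hasDerivAt_sub_comp_mul hderiv ht hy).differentiableAt.differentiableWithinAt
  · rw [interior_Ioc]
    intro t ht
    rw [(hasDerivAt_sub_comp_mul hderiv ht hy).deriv]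
    exact sub_mul_comp_mul_nonpos_of_antitoneOn hH (Ioo_subset_Ioc_self ht) hy

end

theorem rWeierstrass_of_antitone_Hf_Ioc_general (f f' : ℝ → ℝ)
    (hderiv : ∀ x ∈ Set.Ioc (0:ℝ) 1, HasDerivWithinAt f (f' x) (Set.Ioc 0 1) x)
    (hf1 : f 1 = 1)
    (hH : AntitoneOn (fun x => x * f' x) (Set.Ioc 0 1)) :
    ∀ x ∈ Set.Ioc (0:ℝ) 1, ∀ y ∈ Set.Ioc (0:ℝ) 1, f (x * y) ≤ f x + f y - 1 := by
  intro x hx y hy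
  have h := antitoneOn_sub_comp_mul hderiv hH hy hx (right_mem_Ioc.2 zero_lt_one) hx.2
  simp only [one_mul, hf1] at h
  linarith

/-- If `f` is a positive `C¹` function on `(0,1]` with `f 1 = 1` such that
`H_f x = x * f' x` is non-increasing on `(0,1]`, then `f` is an r-Weierstrass function
on `(0,1]`: `f (x * y) ≤ f x + f y - 1` for all `x, y ∈ (0,1]`. -/
theorem rWeierstrass_of_antitone_Hf_Ioc (f f' : ℝ → ℝ)
    (hderiv : ∀ x ∈ Set.Ioc (0:ℝ) 1, HasDerivWithinAt f (f' x) (Set.Ioc 0 1) x)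
    (hcont : ContinuousOn f' (Set.Ioc 0 1))
    (hpos : ∀ x ∈ Set.Ioc (0:ℝ) 1, 0 < f x)
    (hf1 : f 1 = 1)
    (hH : AntitoneOn (fun x => x * f' x) (Set.Ioc 0 1)) :
    ∀ x ∈ Set.Ioc (0:ℝ) 1, ∀ y ∈ Set.Ioc (0:ℝ) 1, f (x * y) ≤ f x + f y - 1 :=
  rWeierstrass_of_antitone_Hf_Ioc_general f f' hderiv hf1 hH
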